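/- Let a complete graph on N ≥ 5t + 4 vertices, minus a graph of maximum degree less than t, be 2-edge-colored with red and blue. Then there is a monochromatic triangle. -/
import Mathlib


open Finset

/-- `G` contains `n` pairwise vertex-disjoint `k`-cliques. -/
def CliqueMatching {V : Type*} (G : SimpleGraph V) (k n : ℕ) : Prop :=
  ∃ T : Finset (Finset V), T.card = n ∧ (∀ t ∈ T, G.IsNClique k t) ∧
    (T : Set (Finset V)).Pairwise fun a b => Disjoint a b

/-- `G` contains `n` pairwise vertex-disjoint `k`-cliques, all lying in a single
connected component of `G` (a connected clique matching). -/
def ConnCliqueMatching {V : Type*} (G : SimpleGraph V) (k n : ℕ) : Prop :=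
  ∃ T : Finset (Finset V), T.card = n ∧ (∀ t ∈ T, G.IsNClique k t) ∧
    ((T : Set (Finset V)).Pairwise fun a b => Disjoint a b) ∧
    ∀ u v : V, (∃ t ∈ T, u ∈ t) → (∃ t ∈ T, v ∈ t) → G.Reachable u v


open Finset

lemma key14 (N t : ℕ) (G A B : SimpleGraph (Fin N)) [DecidableRel G.Adj]
    (hdeg : ∀ v, (Finset.univ.filter fun w => w ≠ v ∧ ¬ G.Adj v w).card < t)
    (hAB : ∀ u w, G.Adj u w → A.Adj u w ∨ B.Adj u w)
    (v : Fin N) (S : Finset (Fin N)) (hS : ∀ w ∈ S, A.Adj v w)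
    (hcard : 2 * t + 1 ≤ S.card) :
    (∃ s : Finset (Fin N), A.IsNClique 3 s) ∨
    (∃ s : Finset (Fin N), B.IsNClique 3 s) := by
  by_cases hA : ∃ a ∈ S, ∃ b ∈ S, A.Adj a b
  · obtain ⟨a, ha, b, hb, hab⟩ := hA
    left
    exact ⟨{v, a, b}, SimpleGraph.is3Clique_triple_iff.2 ⟨hS a ha, hS b hb, hab⟩⟩
  · push_neg at hA
    -- pick u in S
    have hSne : S.Nonempty := Finset.card_pos.1 (by omega)
    obtain ⟨u, hu⟩ := hSne
    set T : Finset (Fin N) := (S.erase u).filter (fun w => G.Adj u w) with hT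
    have hTcard : t + 1 ≤ T.card := by
      have h1 := Finset.card_filter_add_card_filter_not
        (s := S.erase u) (p := fun w => G.Adj u w)
      have h2 : ((S.erase u).filter (fun w => ¬ G.Adj u w)).card
          ≤ (Finset.univ.filter fun w => w ≠ u ∧ ¬ G.Adj u w).card := by
        apply Finset.card_le_card
        intro w hw
        simp only [Finset.mem_filter, Finset.mem_erase, Finset.mem_univ] at hw ⊢
        tauto
      rw [← hT] at h1
      have h3 := hdeg u
      have h4 : (S.erase u).card = S.card - 1 := Finset.card_erase_of_mem hu
      omega
    obtain ⟨w, hw⟩ := Finset.card_pos.1 (show 0 < T.card by omega)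
    have hwS : w ∈ S := Finset.mem_of_mem_erase (Finset.mem_of_mem_filter _ hw)
    have huw : G.Adj u w := (Finset.mem_filter.1 hw).2
    -- find x in T.erase w not a non-neighbor of w
    have hnotsub : ¬ (T.erase w ⊆ Finset.univ.filter fun x => x ≠ w ∧ ¬ G.Adj w x) := by
      intro hsub
      have := Finset.card_le_card hsub
      have h3 := hdeg w
      have h4 : (T.erase w).card = T.card - 1 := Finset.card_erase_of_mem hw
      omega
    obtain ⟨x, hx, hxbad⟩ := Finset.not_subset.1 hnotsub
    have hxw : x ≠ w := Finset.ne_of_mem_erase hx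
    have hwx : G.Adj w x := by
      by_contra h
      exact hxbad (by simp [hxw, h])
    have hxT : x ∈ T := Finset.mem_of_mem_erase hx
    have hxS : x ∈ S := Finset.mem_of_mem_erase (Finset.mem_of_mem_filter _ hxT)
    have hux : G.Adj u x := (Finset.mem_filter.1 hxT).2
    right
    refine ⟨{u, w, x}, SimpleGraph.is3Clique_triple_iff.2 ⟨?_, ?_, ?_⟩⟩
    · exact (hAB u w huw).resolve_left (hA u hu w hwS)
    · exact (hAB u x hux).resolve_left (hA u hu x hxS)
    · exact (hAB w x hwx).resolve_left (hA w hwS x hxS)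

/-- A 2-colored complete graph on `N ≥ 5t + 4` vertices minus a graph of maximum
degree less than `t` contains a monochromatic triangle. -/
theorem stmt14 (N t : ℕ) (hN : 5 * t + 4 ≤ N)
    (G : SimpleGraph (Fin N)) [DecidableRel G.Adj]
    (hdeg : ∀ v, (Finset.univ.filter fun w => w ≠ v ∧ ¬ G.Adj v w).card < t)
    (R : SimpleGraph (Fin N)) (hR : R ≤ G) :
    (∃ s : Finset (Fin N), R.IsNClique 3 s) ∨
    (∃ s : Finset (Fin N), (G \ R).IsNClique 3 s) := by
  classical
  have hNpos : 0 < N := by omega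
  let v : Fin N := ⟨0, hNpos⟩
  set NG : Finset (Fin N) := Finset.univ.filter (fun w => G.Adj v w) with hNG
  have hNGcard : 4 * t + 4 ≤ NG.card := by
    have hsub : Finset.univ.erase v ⊆
        NG ∪ (Finset.univ.filter fun w => w ≠ v ∧ ¬ G.Adj v w) := by
      intro w hw
      have hwv : w ≠ v := Finset.ne_of_mem_erase hw
      by_cases h : G.Adj v w
      · exact Finset.mem_union_left _ (by simp [hNG, h])
      · exact Finset.mem_union_right _ (by simp [hwv, h])
    have h1 := Finset.card_le_card hsub
    have h2 := Finset.card_union_le NG (Finset.univ.filter fun w => w ≠ v ∧ ¬ G.Adj v w)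
    have h3 := hdeg v
    have h4 : (Finset.univ.erase v).card = N - 1 := by
      rw [Finset.card_erase_of_mem (Finset.mem_univ v)]; simp
    omega
  set Sr : Finset (Fin N) := NG.filter (fun w => R.Adj v w) with hSr
  set Sb : Finset (Fin N) := NG.filter (fun w => ¬ R.Adj v w) with hSb
  have hsplit : Sr.card + Sb.card = NG.card :=
    Finset.card_filter_add_card_filter_not (p := fun w => R.Adj v w)
  by_cases hcase : 2 * t + 1 ≤ Sr.card
  · refine key14 N t G R (G \ R) hdeg (fun u w h => ?_) v Sr (fun w hw => ?_) hcase
    · by_cases hr : R.Adj u w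
      · exact Or.inl hr
      · exact Or.inr ⟨h, hr⟩
    · exact (Finset.mem_filter.1 hw).2
  · have hb : 2 * t + 1 ≤ Sb.card := by omega
    have := key14 N t G (G \ R) R hdeg (fun u w h => ?_) v Sb (fun w hw => ?_) hb
    · exact this.symm
    · by_cases hr : R.Adj u w
      · exact Or.inr hr
      · exact Or.inl ⟨h, hr⟩
    · have hw' := Finset.mem_filter.1 hw
      have hG : G.Adj v w := (Finset.mem_filter.1 hw'.1).2
      exact ⟨hG, hw'.2⟩
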